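/- arXiv:2003.14233 — 7 statements merged into one kernel-verified Lean document; each statement's English description precedes it below -/
import Mathlib

section
/- For every finite tree T (a finite connected acyclic simple graph) with at least one vertex, Γ(T) ≤ 2·b(T) + 2. -/
open SimpleGraph

/-- The degree of a vertex `v` in a simple graph `G`. -/
noncomputable def vdeg {V : Type*} (G : SimpleGraph V) (v : V) : ℕ :=
  Nat.card {w // G.Adj v w}

/-- A Grundy coloring of `G` with `k` colors: a proper coloring whose `k` color classes are
all nonempty (surjectivity) and such that every vertex of a class has a neighbor in every
smaller-indexed class. -/
def IsGrundyColoring {V : Type*} (G : SimpleGraph V) {k : ℕ} (C : V → Fin k) : Prop :=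
  (∀ v w, G.Adj v w → C v ≠ C w) ∧
  Function.Surjective C ∧
  (∀ v : V, ∀ i : Fin k, i < C v → ∃ w, G.Adj v w ∧ C w = i)

/-- The Grundy number of `G`: the largest `k` admitting a Grundy coloring with `k` colors. -/
noncomputable def grundyNum {V : Type*} (G : SimpleGraph V) : ℕ :=
  sSup {k | ∃ C : V → Fin k, IsGrundyColoring G C}

/-- A b-coloring of `G` with `k` colors: a proper coloring such that every color class
contains a vertex having a neighbor in each of the other classes (hence all classes are
nonempty). -/
def IsBColoring {V : Type*} (G : SimpleGraph V) {k : ℕ} (C : V → Fin k) : Prop :=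
  (∀ v w, G.Adj v w → C v ≠ C w) ∧
  (∀ i : Fin k, ∃ v, C v = i ∧ ∀ j : Fin k, j ≠ i → ∃ w, G.Adj v w ∧ C w = j)

/-- The b-chromatic number of `G`: the largest `k` admitting a b-coloring with `k` colors. -/
noncomputable def bChrom {V : Type*} (G : SimpleGraph V) : ℕ :=
  sSup {k | ∃ C : V → Fin k, IsBColoring G C}

/-!
Let `C` be a Grundy coloring of the tree `T` with `k ≥ 3` colors and put `m = ⌈k/2⌉`. Starting
at a vertex `r` of color `k - 1` and repeatedly stepping to a neighbor of the next smaller color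
gives a walk `w₀ = r, w₁, …` along which the colors strictly decrease; it never backtracks, so in a
tree it is a geodesic and `w_t` sits at depth `t` below `r`. Give `w_t` the new color `t`. A
neighbor of `w_t` of smaller Grundy color is a child of `w_t`, and `w_t` has such neighbors in
every color below `k - 1 - t`; since `2m ≤ k + 1` there are enough of them to give `w_t` a child of
each new color outside `{t - 1, t, t + 1}`, the remaining two being carried by `w_{t ± 1}`. Every
other vertex gets `0` or `1`, different from its parent. This is a b-coloring with `m` colors, so
`Γ(T) ≤ 2 b(T)` as soon as `Γ(T) ≥ 3`.
-/

namespace SimpleGraph.IsTree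

variable {V : Type*} {T : SimpleGraph V}

theorem eq_of_adj_of_dist_add_one (hT : T.IsTree) (r : V) {a a' b : V}
    (ha : T.Adj a b) (ha' : T.Adj a' b)
    (hd : T.dist r a + 1 = T.dist r b) (hd' : T.dist r a' + 1 = T.dist r b) : a = a' := by
  classical
  obtain ⟨q, hq, -⟩ := hT.connected.exists_path_of_dist r b
  have mem_support {c : V} (hc : T.Adj c b) (hcd : T.dist r c + 1 = T.dist r b) :
      c ∈ q.support := by
    obtain ⟨p, hp, hpl⟩ := hT.connected.exists_path_of_dist r c
    refine hT.isAcyclic.mem_support_of_ne_mem_support_of_adj_of_isPath hq hp hc.symm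
      fun hb => ?_
    have := (dist_le (p.takeUntil b hb)).trans (p.length_takeUntil_le_length hb)
    omega
  rw [hT.isAcyclic.eq_penultimate_of_adj_end hq ha.symm (mem_support ha hd),
    hT.isAcyclic.eq_penultimate_of_adj_end hq ha'.symm (mem_support ha' hd')]

theorem dist_add_one_of_adj_of_ne (hT : T.IsTree) (r : V) {a b c : V}
    (hab : T.Adj a b) (hbc : T.Adj b c) (hac : a ≠ c) (hd : T.dist r a + 1 = T.dist r b) :
    T.dist r b + 1 = T.dist r c := by
  rcases hT.dist_eq_dist_add_one_of_adj r hbc with h | h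
  · exact absurd (hT.eq_of_adj_of_dist_add_one r hab hbc.symm hd h.symm) hac
  · exact h.symm

theorem dist_eq_of_nonbacktracking (hT : T.IsTree) {w : ℕ → V} {n : ℕ}
    (hadj : ∀ t < n, T.Adj (w t) (w (t + 1))) (hne : ∀ t, t + 2 ≤ n → w t ≠ w (t + 2)) :
    ∀ t ≤ n, T.dist (w 0) (w t) = t
  | 0, _ => dist_self
  | 1, h => dist_eq_one_iff_adj.mpr (hadj 0 h)
  | t + 2, h => by
    have := hT.dist_add_one_of_adj_of_ne (w 0) (hadj t (by omega)) (hadj (t + 1) h) (hne t h)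
      (by rw [dist_eq_of_nonbacktracking hT hadj hne t (by omega),
        dist_eq_of_nonbacktracking hT hadj hne (t + 1) (by omega)])
    rw [← this, dist_eq_of_nonbacktracking hT hadj hne (t + 1) (by omega)]

end SimpleGraph.IsTree

section Grundy

variable {V : Type*} {G : SimpleGraph V} {k : ℕ} {C : V → Fin k}

theorem IsGrundyColoring.exists_adj_coe_eq (hC : IsGrundyColoring G C) {v : V} {j : ℕ}
    (hj : j < C v) : ∃ x, G.Adj v x ∧ (C x : ℕ) = j := by
  obtain ⟨x, hvx, hx⟩ := hC.2.2 v ⟨j, hj.trans (C v).isLt⟩ (Fin.mk_lt_of_lt_val hj)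
  exact ⟨x, hvx, by rw [hx]⟩

variable (G C) in
open Classical in
noncomputable def grundyChain (v : V) : ℕ → V
  | 0 => v
  | t + 1 =>
    if h : ∃ x, G.Adj (grundyChain v t) x ∧ (C x : ℕ) + 1 = C (grundyChain v t) then h.choose
    else grundyChain v t

theorem IsGrundyColoring.grundyChain_succ_spec (hC : IsGrundyColoring G C) {v : V} {t : ℕ}
    (ht : 0 < (C (grundyChain G C v t) : ℕ)) :
    G.Adj (grundyChain G C v t) (grundyChain G C v (t + 1)) ∧
      (C (grundyChain G C v (t + 1)) : ℕ) + 1 = C (grundyChain G C v t) := by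
  have h : ∃ x, G.Adj (grundyChain G C v t) x ∧ (C x : ℕ) + 1 = C (grundyChain G C v t) := by
    obtain ⟨x, hx, hCx⟩ := hC.exists_adj_coe_eq (Nat.sub_one_lt_of_lt ht)
    exact ⟨x, hx, by omega⟩
  rw [grundyChain, dif_pos h]
  exact h.choose_spec

theorem IsGrundyColoring.coe_grundyChain (hC : IsGrundyColoring G C) {v : V} :
    ∀ {t : ℕ}, t ≤ C v → (C (grundyChain G C v t) : ℕ) = (C v : ℕ) - t
  | 0, _ => rfl
  | t + 1, ht => by
    have ih := hC.coe_grundyChain (Nat.le_of_succ_le ht)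
    have := (hC.grundyChain_succ_spec (t := t) (by rw [ih]; exact Nat.sub_pos_of_lt ht)).2
    omega

theorem IsGrundyColoring.adj_grundyChain (hC : IsGrundyColoring G C) {v : V} {t : ℕ}
    (ht : t < C v) : G.Adj (grundyChain G C v t) (grundyChain G C v (t + 1)) :=
  (hC.grundyChain_succ_spec (by rw [hC.coe_grundyChain ht.le]; exact Nat.sub_pos_of_lt ht)).1

end Grundy

section Tree

variable {V : Type*} {T : SimpleGraph V} {k : ℕ} {C : V → Fin k}

theorem IsGrundyColoring.dist_grundyChain (hT : T.IsTree) (hC : IsGrundyColoring T C) {r : V}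
    {t : ℕ} (ht : t ≤ C r) : T.dist r (grundyChain T C r t) = t :=
  hT.dist_eq_of_nonbacktracking (w := grundyChain T C r) (fun _ hs => hC.adj_grundyChain hs)
    (fun s hs he => by
      have := congrArg (fun x => (C x : ℕ)) he
      simp only [hC.coe_grundyChain (by omega : s ≤ C r),
        hC.coe_grundyChain (by omega : s + 2 ≤ C r)] at this
      omega) t ht

theorem IsGrundyColoring.dist_of_adj_grundyChain (hT : T.IsTree) (hC : IsGrundyColoring T C)
    {r x : V} {t : ℕ} (ht : t ≤ C r) (hx : T.Adj (grundyChain T C r t) x)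
    (hCx : C x < C (grundyChain T C r t)) : T.dist r x = t + 1 := by
  cases t with
  | zero => exact dist_eq_one_iff_adj.mpr hx
  | succ s =>
    have hCs := hC.coe_grundyChain (v := r) (t := s) (by omega)
    have hCs1 := hC.coe_grundyChain (v := r) (t := s + 1) ht
    rw [Fin.lt_def, hCs1] at hCx
    rw [← hC.dist_grundyChain hT ht]
    refine (hT.dist_add_one_of_adj_of_ne r (hC.adj_grundyChain (by omega)) hx (fun he => ?_)
      (by rw [hC.dist_grundyChain hT (by omega), hC.dist_grundyChain hT ht])).symm
    rw [he] at hCs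
    omega

end Tree

section Extension

variable {V : Type*} {T : SimpleGraph V} {r : V} {S : Set V} {f : V → ℕ}

variable (T r S f) in
open Classical in
noncomputable def extendColoring (v : V) : ℕ :=
  if v ∈ S then f v
  else if h : ∃ p, T.Adj p v ∧ T.dist r p < T.dist r v then
    if extendColoring h.choose = 0 then 1 else 0
  else 0
termination_by T.dist r v
decreasing_by all_goals exact h.choose_spec.2

theorem extendColoring_of_mem {v : V} (hv : v ∈ S) : extendColoring T r S f v = f v := by
  rw [extendColoring, if_pos hv]

theorem extendColoring_lt_two_of_notMem {v : V} (hv : v ∉ S) : extendColoring T r S f v < 2 := by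
  rw [extendColoring, if_neg hv]
  split_ifs <;> simp

theorem extendColoring_of_notMem_of_exists {v : V} (hv : v ∉ S)
    (h : ∃ p, T.Adj p v ∧ T.dist r p < T.dist r v) :
    extendColoring T r S f v = if extendColoring T r S f h.choose = 0 then 1 else 0 := by
  rw [extendColoring, if_neg hv, dif_pos h]

theorem SimpleGraph.IsTree.extendColoring_ne_of_adj (hT : T.IsTree)
    (hS : ∀ x y, T.Adj x y → T.dist r x + 1 = T.dist r y → y ∈ S → x ∈ S ∧ f x ≠ f y)
    {x y : V} (hxy : T.Adj x y) : extendColoring T r S f x ≠ extendColoring T r S f y := by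
  wlog hd : T.dist r x + 1 = T.dist r y generalizing x y
  · exact (this hxy.symm (by have := hT.dist_eq_dist_add_one_of_adj r hxy; omega)).symm
  by_cases hy : y ∈ S
  · obtain ⟨hx, hne⟩ := hS x y hxy hd hy
    rwa [extendColoring_of_mem hx, extendColoring_of_mem hy]
  have h : ∃ p, T.Adj p y ∧ T.dist r p < T.dist r y := ⟨x, hxy, by omega⟩
  have hparent : h.choose = x :=
    hT.eq_of_adj_of_dist_add_one r h.choose_spec.1 hxy
      (by have := h.choose_spec.2; have := hT.dist_eq_dist_add_one_of_adj r h.choose_spec.1; omega)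
      hd
  rw [extendColoring_of_notMem_of_exists hy h, hparent]
  split_ifs <;> omega

end Extension

-- The increasing enumeration of `ℕ ∖ {t, t + 1}`: a pendant child of `w_t` never gets the color
-- `t` of `w_t`, and the color `t + 1` is supplied by `w_{t+1}`.
def skipTwo (t c : ℕ) : ℕ := if c < t then c else c + 2

theorem skipTwo_ne (t c : ℕ) : skipTwo t c ≠ t := by
  unfold skipTwo; split_ifs <;> omega

section ChainColoring

variable {V : Type*} {T : SimpleGraph V} {k : ℕ} {C : V → Fin k} {r : V} {m : ℕ}

variable (T C r m)

def chainSpine : Set V := grundyChain T C r '' Set.Iio m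

def chainPendants : Set V :=
  {v | ∃ t < m, T.Adj (grundyChain T C r t) v ∧ C v < C (grundyChain T C r t) ∧
    skipTwo t (C v) < m}

open Classical in
noncomputable def chainColor (v : V) : ℕ :=
  if v ∈ chainSpine T C r m then T.dist r v else skipTwo (T.dist r v - 1) (C v)

variable {T C r m}

theorem IsGrundyColoring.chainColor_grundyChain (hT : T.IsTree) (hC : IsGrundyColoring T C)
    (hmr : 2 * m ≤ C r + 2) {t : ℕ} (ht : t < m) :
    chainColor T C r m (grundyChain T C r t) = t := by
  rw [chainColor, if_pos ⟨t, ht, rfl⟩, hC.dist_grundyChain hT (by omega)]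

theorem IsGrundyColoring.chainColor_of_mem_chainPendants (hT : T.IsTree)
    (hC : IsGrundyColoring T C) (hmr : 2 * m ≤ C r + 2) {v : V}
    (hv : v ∈ chainPendants T C r m) (hv' : v ∉ chainSpine T C r m) :
    ∃ t < m, T.Adj (grundyChain T C r t) v ∧ T.dist r v = t + 1 ∧
      chainColor T C r m v = skipTwo t (C v) ∧ skipTwo t (C v) < m := by
  obtain ⟨t, ht, hadj, hlt, hskip⟩ := hv
  have hd := hC.dist_of_adj_grundyChain hT (by omega) hadj hlt
  refine ⟨t, ht, hadj, hd, ?_, hskip⟩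
  rw [chainColor, if_neg hv', hd, Nat.add_sub_cancel]

theorem IsGrundyColoring.chainColor_lt (hT : T.IsTree) (hC : IsGrundyColoring T C)
    (hmr : 2 * m ≤ C r + 2) {v : V} (hv : v ∈ chainSpine T C r m ∪ chainPendants T C r m) :
    chainColor T C r m v < m := by
  by_cases hs : v ∈ chainSpine T C r m
  · obtain ⟨t, ht, rfl⟩ := hs
    rw [hC.chainColor_grundyChain hT hmr ht]
    exact ht
  · obtain ⟨t, -, -, -, hcol, hlt⟩ :=
      hC.chainColor_of_mem_chainPendants hT hmr (hv.resolve_left hs) hs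
    rwa [hcol]

theorem IsGrundyColoring.chainColor_parent (hT : T.IsTree) (hC : IsGrundyColoring T C)
    (hmr : 2 * m ≤ C r + 2) {x y : V} (hxy : T.Adj x y) (hd : T.dist r x + 1 = T.dist r y)
    (hy : y ∈ chainSpine T C r m ∪ chainPendants T C r m) :
    x ∈ chainSpine T C r m ∪ chainPendants T C r m ∧
      chainColor T C r m x ≠ chainColor T C r m y := by
  by_cases hs : y ∈ chainSpine T C r m
  · obtain ⟨t, ht, rfl⟩ := hs
    have ht : t < m := ht
    have hdt := hC.dist_grundyChain hT (r := r) (t := t) (by omega)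
    obtain ⟨s, rfl⟩ : ∃ s, t = s + 1 := ⟨t - 1, by omega⟩
    have hx : x = grundyChain T C r s :=
      hT.eq_of_adj_of_dist_add_one r hxy (hC.adj_grundyChain (by omega)) hd
        (by rw [hdt, hC.dist_grundyChain hT (by omega)])
    subst hx
    refine ⟨Or.inl ⟨s, by simp only [Set.mem_Iio]; omega, rfl⟩, ?_⟩
    rw [hC.chainColor_grundyChain hT hmr (by omega), hC.chainColor_grundyChain hT hmr ht]
    omega
  · obtain ⟨t, ht, hadj, hdy, hcol, -⟩ :=
      hC.chainColor_of_mem_chainPendants hT hmr (hy.resolve_left hs) hs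
    have hx : x = grundyChain T C r t :=
      hT.eq_of_adj_of_dist_add_one r hxy hadj hd
        (by rw [hdy, hC.dist_grundyChain hT (by omega)])
    subst hx
    refine ⟨Or.inl ⟨t, ht, rfl⟩, ?_⟩
    rw [hC.chainColor_grundyChain hT hmr ht, hcol]
    exact (skipTwo_ne t _).symm

theorem IsGrundyColoring.exists_adj_chainColor_eq (hT : T.IsTree) (hC : IsGrundyColoring T C)
    (hmr : 2 * m ≤ C r + 2) {i j : ℕ} (hi : i < m) (hj : j < m) (hji : j ≠ i) :
    ∃ x, T.Adj (grundyChain T C r i) x ∧ x ∈ chainSpine T C r m ∪ chainPendants T C r m ∧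
      chainColor T C r m x = j := by
  have hCi := hC.coe_grundyChain (v := r) (t := i) (by omega)
  by_cases hprev : j + 1 = i
  · subst hprev
    exact ⟨_, (hC.adj_grundyChain (by omega)).symm, Or.inl ⟨j, hj, rfl⟩,
      hC.chainColor_grundyChain hT hmr hj⟩
  by_cases hnext : j = i + 1
  · subst hnext
    exact ⟨_, hC.adj_grundyChain (by omega), Or.inl ⟨i + 1, hj, rfl⟩,
      hC.chainColor_grundyChain hT hmr hj⟩
  obtain ⟨c, hcj, hc⟩ : ∃ c, skipTwo i c = j ∧ c + 2 + i ≤ C r := by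
    by_cases hlt : j < i
    · exact ⟨j, if_pos hlt, by omega⟩
    · exact ⟨j - 2, by unfold skipTwo; split_ifs <;> omega, by omega⟩
  obtain ⟨x, hx, hCx⟩ := hC.exists_adj_coe_eq (v := grundyChain T C r i) (j := c) (by omega)
  have hpend : x ∈ chainPendants T C r m :=
    ⟨i, hi, hx, by rw [Fin.lt_def]; omega, by rw [hCx, hcj]; exact hj⟩
  have hspine : x ∉ chainSpine T C r m := by
    rintro ⟨t, ht, rfl⟩
    have ht : t < m := ht
    have hd := hC.dist_of_adj_grundyChain hT (by omega) hx (by rw [Fin.lt_def]; omega)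
    rw [hC.dist_grundyChain hT (by omega)] at hd
    rw [hC.coe_grundyChain (by omega), hd] at hCx
    omega
  obtain ⟨t, -, -, hd, hcol, -⟩ := hC.chainColor_of_mem_chainPendants hT hmr hpend hspine
  have hti : t = i := by
    have := hC.dist_of_adj_grundyChain hT (by omega) hx (by rw [Fin.lt_def]; omega)
    omega
  exact ⟨x, hx, Or.inr hpend, by rw [hcol, hti, hCx, hcj]⟩

theorem IsGrundyColoring.exists_isBColoring (hT : T.IsTree) (hC : IsGrundyColoring T C)
    (hm : 2 ≤ m) (hmk : 2 * m ≤ k + 1) : ∃ D : V → Fin m, IsBColoring T D := by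
  obtain ⟨r, hr⟩ := hC.2.1 ⟨k - 1, by omega⟩
  have hmr : 2 * m ≤ C r + 2 := by rw [hr, Fin.val_mk]; omega
  set S := chainSpine T C r m ∪ chainPendants T C r m
  set g := extendColoring T r S (chainColor T C r m) with hg_def
  have hg : ∀ v, g v < m := fun v => by
    by_cases hv : v ∈ S
    · rw [hg_def, extendColoring_of_mem hv]
      exact hC.chainColor_lt hT hmr hv
    · exact (extendColoring_lt_two_of_notMem hv).trans_le hm
  have hproper : ∀ x y, T.Adj x y → g x ≠ g y := fun x y hxy =>
    hT.extendColoring_ne_of_adj (fun _ _ hxy hd hy => hC.chainColor_parent hT hmr hxy hd hy) hxy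
  refine ⟨fun v => ⟨g v, hg v⟩, fun x y hxy he => hproper x y hxy (Fin.mk.inj he),
    fun i => ⟨grundyChain T C r i, ?_, fun j hji => ?_⟩⟩
  · have hmem : grundyChain T C r i ∈ S := Or.inl ⟨i, i.isLt, rfl⟩
    ext
    exact (extendColoring_of_mem hmem).trans (hC.chainColor_grundyChain hT hmr i.isLt)
  · obtain ⟨x, hx, hxS, hcol⟩ := hC.exists_adj_chainColor_eq hT hmr i.isLt j.isLt
      (Fin.val_ne_of_ne hji)
    exact ⟨x, hx, Fin.ext ((extendColoring_of_mem hxS).trans hcol)⟩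

end ChainColoring

section Numbers

variable {V : Type*} [Fintype V] {G : SimpleGraph V}

theorem bddAbove_isGrundyColoring : BddAbove {k | ∃ C : V → Fin k, IsGrundyColoring G C} :=
  ⟨Fintype.card V, fun _ ⟨C, hC⟩ => by simpa using Fintype.card_le_of_surjective C hC.2.1⟩

theorem IsBColoring.le_bChrom {k : ℕ} {D : V → Fin k} (hD : IsBColoring G D) : k ≤ bChrom G :=
  le_csSup ⟨Fintype.card V, fun _ ⟨E, hE⟩ => by
    simpa using Fintype.card_le_of_surjective E fun i => (hE.2 i).imp fun _ hv => hv.1⟩ ⟨D, hD⟩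

theorem exists_isGrundyColoring_grundyNum (h : 0 < grundyNum G) :
    ∃ C : V → Fin (grundyNum G), IsGrundyColoring G C :=
  Nat.sSup_mem (Set.nonempty_iff_ne_empty.mpr fun he => by simp [grundyNum, he] at h)
    bddAbove_isGrundyColoring

end Numbers

theorem stmt1_general {V : Type*} [Fintype V] (T : SimpleGraph V) (hT : T.IsTree) :
    grundyNum T ≤ 2 * bChrom T + 2 := by
  by_cases h : grundyNum T ≤ 2
  · omega
  obtain ⟨C, hC⟩ := exists_isGrundyColoring_grundyNum (G := T) (by omega)
  obtain ⟨D, hD⟩ := hC.exists_isBColoring hT (m := (grundyNum T + 1) / 2) (by omega) (by omega)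
  have := hD.le_bChrom
  omega

/-- For every finite tree `T` with at least one vertex, `Γ(T) ≤ 2·b(T) + 2`. -/
theorem stmt1 {V : Type*} [Fintype V] [Nonempty V] (T : SimpleGraph V) (hT : T.IsTree) :
    grundyNum T ≤ 2 * bChrom T + 2 :=
  stmt1_general T hT
end

section
/- For every finite simple graph G with at least one vertex, Γ(G) ≤ 2·m(G). -/
/-!
In a Grundy coloring with `k` colors, a vertex of color `i` (counting from `0`) has neighbors of
all `i` smaller colors, so its degree is at least `i`. Choosing one vertex from each of the
top `t = ⌈k/2⌉` colors gives `t` vertices of degree at least `k - t ≥ t - 1`, hence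
`⌈k/2⌉ ≤ m(G)`.
-/

open SimpleGraph

/-- The parameter `m(G)`: the largest `k` such that `G` has `k` vertices each of degree at
least `k - 1` (equivalently, `max {i : d_i ≥ i - 1}` for the non-increasing degree
sequence `d_1 ≥ d_2 ≥ …`). -/
noncomputable def mParam {V : Type*} (G : SimpleGraph V) : ℕ :=
  sSup {k | ∃ s : Finset V, s.card = k ∧ ∀ v ∈ s, k - 1 ≤ vdeg G v}

section

variable {V : Type*} {G : SimpleGraph V}

theorem IsGrundyColoring.le_vdeg [Finite V] {k : ℕ} {C : V → Fin k}
    (hC : IsGrundyColoring G C) (v : V) : (C v : ℕ) ≤ vdeg G v := by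
  have hnbr : ∀ j : Fin (C v), ∃ w : {w // G.Adj v w}, C w = Fin.castLT j (j.2.trans (C v).2) :=
    fun j => by
      obtain ⟨w, hvw, hw⟩ := hC.2.2 v (Fin.castLT j (j.2.trans (C v).2)) j.2
      exact ⟨⟨w, hvw⟩, hw⟩
  choose f hf using hnbr
  have hf_inj : f.Injective := fun a b hab => by
    have := (hf a).symm.trans ((congrArg (fun w => C w.1) hab).trans (hf b))
    exact Fin.ext (by simpa using congrArg Fin.val this)
  simpa [vdeg] using Nat.card_le_card_of_injective f hf_inj

theorem IsGrundyColoring.exists_finset_card_eq_le_vdeg [Finite V] {k : ℕ} {C : V → Fin k}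
    (hC : IsGrundyColoring G C) {t : ℕ} (htk : t ≤ k) :
    ∃ s : Finset V, s.card = t ∧ ∀ v ∈ s, k - t ≤ vdeg G v := by
  let top : Fin t ↪ Fin k :=
    ⟨fun j => ⟨k - t + j, by omega⟩, fun a b hab => Fin.ext (by simpa using hab)⟩
  let rep : Fin k ↪ V := ⟨Function.surjInv hC.2.1, Function.injective_surjInv hC.2.1⟩
  refine ⟨Finset.univ.map (top.trans rep), by simp, ?_⟩
  simp only [Finset.mem_map, Finset.mem_univ, true_and, forall_exists_index]
  rintro v j rfl
  have hcolor : C (top.trans rep j) = top j := Function.surjInv_eq hC.2.1 (top j)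
  calc k - t ≤ top j := Nat.le_add_right _ _
    _ = C (top.trans rep j) := by rw [hcolor]
    _ ≤ vdeg G (top.trans rep j) := hC.le_vdeg _

theorem le_mParam [Finite V] {s : Finset V} (hs : ∀ v ∈ s, s.card - 1 ≤ vdeg G v) :
    s.card ≤ mParam G := by
  cases nonempty_fintype V
  refine le_csSup ⟨Fintype.card V, ?_⟩ ⟨s, rfl, hs⟩
  rintro n ⟨s', rfl, -⟩
  exact s'.card_le_univ

end

theorem stmt2_general {V : Type*} [Fintype V] (G : SimpleGraph V) :
    grundyNum G ≤ 2 * mParam G := by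
  refine csSup_le' ?_
  rintro k ⟨C, hC⟩
  obtain ⟨s, hcard, hdeg⟩ :=
    hC.exists_finset_card_eq_le_vdeg (t := (k + 1) / 2) (by omega)
  have hm : s.card ≤ mParam G :=
    le_mParam fun v hv => le_trans (by omega) (hdeg v hv)
  omega

/-- For every finite simple graph `G` with at least one vertex, `Γ(G) ≤ 2·m(G)`. -/
theorem stmt2 {V : Type*} [Fintype V] [Nonempty V] (G : SimpleGraph V) :
    grundyNum G ≤ 2 * mParam G :=
  stmt2_general G
end

section
/- If a finite simple graph G admits a Grundy coloring with p colors, then for every i with 1 ≤ i ≤ p, G has at least i vertices of degree at least p − i. -/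
/-!
A vertex of color `c` has neighbors of all `c` smaller colors, so its degree is at least `c`.
Choosing one vertex of each of the `i` largest colors `p - i, …, p - 1` gives the required set.
-/

open SimpleGraph

open Finset

theorem Function.Surjective.exists_finset_card_eq_mapsTo {α β : Type*} {f : α → β}
    (hf : Function.Surjective f) (t : Finset β) :
    ∃ s : Finset α, s.card = t.card ∧ ∀ a ∈ s, f a ∈ t := by
  classical
  refine ⟨t.image (Function.surjInv hf),
    card_image_of_injective t (Function.injective_surjInv hf), fun a ha => ?_⟩
  obtain ⟨b, hb, rfl⟩ := mem_image.mp ha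
  rwa [Function.surjInv_eq hf]

theorem vdeg_eq_card_filter {V : Type*} [Fintype V] (G : SimpleGraph V) [DecidableRel G.Adj]
    (v : V) : vdeg G v = #{w | G.Adj v w} := by
  rw [vdeg, Nat.card_eq_fintype_card, Fintype.card_subtype]

theorem IsGrundyColoring.color_le_vdeg {V : Type*} [Fintype V] {G : SimpleGraph V} {k : ℕ}
    {C : V → Fin k} (hC : IsGrundyColoring G C) (v : V) : (C v : ℕ) ≤ vdeg G v := by
  classical
  have hsub : Iio (C v) ⊆ image C {w | G.Adj v w} := fun i hi => by
    obtain ⟨w, hvw, rfl⟩ := hC.2.2 v i (mem_Iio.mp hi)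
    exact mem_image_of_mem C (mem_filter.mpr ⟨mem_univ w, hvw⟩)
  calc (C v : ℕ) = #(Iio (C v)) := (Fin.card_Iio _).symm
    _ ≤ #(image C {w | G.Adj v w}) := card_le_card hsub
    _ ≤ #{w | G.Adj v w} := card_image_le
    _ = vdeg G v := (vdeg_eq_card_filter G v).symm

/-- If a finite simple graph `G` admits a Grundy coloring with `p` colors, then for every
`i` with `1 ≤ i ≤ p`, `G` has at least `i` vertices of degree at least `p - i`. -/
theorem stmt3 {V : Type*} [Fintype V] (G : SimpleGraph V) {p : ℕ} (C : V → Fin p)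
    (hC : IsGrundyColoring G C) :
    ∀ i : ℕ, 1 ≤ i → i ≤ p → ∃ s : Finset V, s.card = i ∧ ∀ v ∈ s, p - i ≤ vdeg G v := by
  intro i _ hip
  let c₀ : Fin p := ⟨p - i, by omega⟩
  obtain ⟨s, hs_card, hs_color⟩ := hC.2.1.exists_finset_card_eq_mapsTo (Ici c₀)
  refine ⟨s, by rw [hs_card, Fin.card_Ici]; exact Nat.sub_sub_self hip, fun v hv => ?_⟩
  have hc₀v : c₀ ≤ C v := mem_Ici.mp (hs_color v hv)
  exact (Fin.le_iff_val_le_val.mp hc₀v).trans (hC.color_le_vdeg v)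
end

section
/- For every t ≥ 2, the graph B_t satisfies Γ(B_t) = t + 1. -/
open SimpleGraph

/-- The graph `B_t`: the complete bipartite graph `K_{t,t}` on parts `{u_1,…,u_t}` and
`{w_1,…,w_t}` minus a matching of size `t - 1`; `u_i` is adjacent to `w_j` iff `i ≠ j`
or `i = j` is the last index. -/
def Bgraph (t : ℕ) : SimpleGraph (Fin t ⊕ Fin t) :=
  SimpleGraph.fromRel (fun a b =>
    match a, b with
    | Sum.inl i, Sum.inr j => i ≠ j ∨ (i = j ∧ (i : ℕ) = t - 1)
    | _, _ => False)

/-!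
A vertex of color `c` in a Grundy coloring has neighbors of all `c` smaller colors, so a Grundy
coloring of a graph of maximum degree `Δ` uses at most `Δ + 1` colors; `B_t` is a subgraph of
`K_{t,t}`, so `Γ(B_t) ≤ t + 1`. Conversely, giving `u_i` and `w_i` color `i` and then recoloring
`u_t`, which is adjacent to all of `w_1, …, w_t`, with the new color `t + 1` is a Grundy coloring.
-/

namespace IsGrundyColoring

variable {V : Type*} {G : SimpleGraph V} {k : ℕ} {C : V → Fin k}

theorem val_le_vdeg [Finite V] (hC : IsGrundyColoring G C) (v : V) : (C v : ℕ) ≤ vdeg G v := by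
  have hnbr : ∀ i : Fin (C v), ∃ w : {w // G.Adj v w}, C w = Fin.castLE (C v).isLt.le i :=
    fun i => by
      obtain ⟨w, hvw, hw⟩ := hC.2.2 v (Fin.castLE (C v).isLt.le i) (by simp [Fin.lt_def])
      exact ⟨⟨w, hvw⟩, hw⟩
  choose f hf using hnbr
  have hf_inj : Function.Injective f := fun i j hij =>
    Fin.castLE_injective _ (by rw [← hf i, ← hf j, hij])
  simpa [vdeg] using Nat.card_le_card_of_injective f hf_inj

theorem le_succ_of_forall_vdeg_le [Finite V] (hC : IsGrundyColoring G C) {d : ℕ}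
    (hd : ∀ v, vdeg G v ≤ d) : k ≤ d + 1 := by
  rcases k with _ | k
  · omega
  obtain ⟨v, hv⟩ := hC.2.1 (Fin.last k)
  have := hC.val_le_vdeg v
  rw [hv, Fin.val_last] at this
  linarith [hd v]

end IsGrundyColoring

theorem grundyNum_eq_of_isGrundyColoring {V : Type*} {G : SimpleGraph V} {n : ℕ}
    {C : V → Fin n} (hC : IsGrundyColoring G C)
    (hle : ∀ k (C' : V → Fin k), IsGrundyColoring G C' → k ≤ n) : grundyNum G = n :=
  IsGreatest.csSup_eq ⟨⟨C, hC⟩, fun _ ⟨C', hC'⟩ => hle _ C' hC'⟩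

theorem vdeg_le_card_of_le_completeBipartiteGraph {W : Type*} [Finite W]
    {G : SimpleGraph (W ⊕ W)} (hG : G ≤ completeBipartiteGraph W W) (v : W ⊕ W) :
    vdeg G v ≤ Nat.card W := by
  refine Nat.card_le_card_of_injective (fun w : {w // G.Adj v w} => Sum.elim id id w.1) ?_
  rintro ⟨a, ha⟩ ⟨b, hb⟩ hab
  have ha' := hG ha
  have hb' := hG hb
  rcases v with v | v <;> rcases a with a | a <;> rcases b with b | b <;> simp_all

namespace Bgraph

variable {t : ℕ}

@[simp]
theorem adj_inl_inr (i j : Fin t) :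
    (Bgraph t).Adj (.inl i) (.inr j) ↔ i ≠ j ∨ (i : ℕ) = t - 1 := by
  simp only [Bgraph, ne_eq, fromRel_adj, reduceCtorEq, not_false_eq_true, or_false, true_and]
  tauto

@[simp]
theorem adj_inr_inl (i j : Fin t) :
    (Bgraph t).Adj (.inr j) (.inl i) ↔ i ≠ j ∨ (i : ℕ) = t - 1 := by
  rw [SimpleGraph.adj_comm, adj_inl_inr]

@[simp]
theorem not_adj_inl_inl (i j : Fin t) : ¬ (Bgraph t).Adj (.inl i) (.inl j) := by
  simp [Bgraph]

@[simp]
theorem not_adj_inr_inr (i j : Fin t) : ¬ (Bgraph t).Adj (.inr i) (.inr j) := by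
  simp [Bgraph]

theorem le_completeBipartiteGraph : Bgraph t ≤ completeBipartiteGraph (Fin t) (Fin t) := by
  rintro (i | i) (j | j) h <;> simp_all

def grundyColoring (t : ℕ) : Fin t ⊕ Fin t → Fin (t + 1)
  | .inl i => if (i : ℕ) = t - 1 then Fin.last t else i.castSucc
  | .inr j => j.castSucc

theorem isGrundyColoring_grundyColoring (ht : 1 ≤ t) :
    IsGrundyColoring (Bgraph t) (grundyColoring t) := by
  refine ⟨?_, ?_, ?_⟩
  · rintro (i | i) (j | j) h <;>
      simp only [adj_inl_inr, adj_inr_inl, not_adj_inl_inl, not_adj_inr_inr, grundyColoring,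
        ne_eq, Fin.ext_iff] at h ⊢ <;>
      split_ifs <;> simp only [Fin.val_last, Fin.val_castSucc] <;> omega
  · intro c
    by_cases hc : (c : ℕ) = t
    · exact ⟨.inl ⟨t - 1, by omega⟩, by simp [grundyColoring, Fin.ext_iff, hc]⟩
    · exact ⟨.inr ⟨c, by omega⟩, Fin.ext rfl⟩
  · rintro (a | a) c hc <;> simp only [grundyColoring] at hc
    · split_ifs at hc <;> simp only [Fin.lt_def, Fin.val_last, Fin.val_castSucc] at hc <;>
        exact ⟨.inr ⟨c, by omega⟩, by simp only [adj_inl_inr, ne_eq, Fin.ext_iff]; omega,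
          Fin.ext rfl⟩
    · simp only [Fin.lt_def, Fin.val_castSucc] at hc
      refine ⟨.inl ⟨c, by omega⟩, by simp only [adj_inr_inl, ne_eq, Fin.ext_iff]; omega, ?_⟩
      simp only [grundyColoring, Fin.castSucc_mk, Fin.eta, ite_eq_right_iff, Fin.ext_iff,
        Fin.val_last]
      omega

end Bgraph

/-- For every `t ≥ 2`, `Γ(B_t) = t + 1`. -/
theorem stmt4 (t : ℕ) (ht : 2 ≤ t) : grundyNum (Bgraph t) = t + 1 :=
  grundyNum_eq_of_isGrundyColoring (Bgraph.isGrundyColoring_grundyColoring (by omega))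
    fun _ _ hC => by
      simpa using hC.le_succ_of_forall_vdeg_le
        (vdeg_le_card_of_le_completeBipartiteGraph Bgraph.le_completeBipartiteGraph)
end

section
/- For every t ≥ 2, the graph B_t satisfies b(B_t) = 2. -/
open SimpleGraph

/-! In `B_t` the vertex `u_t` is adjacent to every `w_j` and `w_t` to every `u_i`, so no vertex
on the `w`-side has the colour of `u_t` and no vertex on the `u`-side has the colour of `w_t`.
A vertex of any third colour would need neighbours of both colours, but its neighbours all lie
on the opposite side. Hence at most two colours, and the bipartition is a b-colouring. -/

open Finset in
theorem Fin.exists_ne_and_ne {k : ℕ} (hk : 2 < k) (a b : Fin k) : ∃ c : Fin k, c ≠ a ∧ c ≠ b := by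
  obtain ⟨c, -, hc⟩ := exists_mem_notMem_of_card_lt_card (s := {a, b}) (t := univ) <|
    (card_le_two).trans_lt (by simpa using hk)
  simp only [mem_insert, mem_singleton, not_or] at hc
  exact ⟨c, hc⟩

theorem bChrom_eq {V : Type*} {G : SimpleGraph V} {k : ℕ} (hk : ∃ C : V → Fin k, IsBColoring G C)
    (hle : ∀ (m : ℕ) (C : V → Fin m), IsBColoring G C → m ≤ k) : bChrom G = k :=
  le_antisymm (csSup_le ⟨k, hk⟩ (by rintro m ⟨C, hC⟩; exact hle m C hC))
    (le_csSup ⟨k, by rintro m ⟨C, hC⟩; exact hle m C hC⟩ hk)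

section Bipartite

variable {α β : Type*} {G : SimpleGraph (α ⊕ β)}

theorem IsBColoring.le_two_of_forall_adj (hG : G ≤ completeBipartiteGraph α β) {x : α} {y : β}
    (hx : ∀ j, G.Adj (.inl x) (.inr j)) (hy : ∀ i, G.Adj (.inl i) (.inr y))
    {k : ℕ} {C : α ⊕ β → Fin k} (hC : IsBColoring G C) : k ≤ 2 := by
  by_contra! hk
  obtain ⟨γ, hγx, hγy⟩ := Fin.exists_ne_and_ne hk (C (.inl x)) (C (.inr y))
  obtain ⟨v, rfl, hv⟩ := hC.2 γ
  rcases v with i | j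
  · obtain ⟨w | j, hw, hwc⟩ := hv (C (.inl x)) hγx.symm
    · simpa using hG hw
    · exact hC.1 _ _ (hx j) hwc.symm
  · obtain ⟨i | w, hw, hwc⟩ := hv (C (.inr y)) hγy.symm
    · exact hC.1 _ _ (hy i) hwc
    · simpa using hG hw

theorem isBColoring_sumElim (hG : G ≤ completeBipartiteGraph α β) {x : α} {y : β}
    (hxy : G.Adj (.inl x) (.inr y)) :
    IsBColoring G (Sum.elim (fun _ => 0) (fun _ => 1) : α ⊕ β → Fin 2) := by
  refine ⟨fun v w hvw => ?_, fun i => ?_⟩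
  · have := hG hvw
    rcases v with v | v <;> rcases w with w | w <;> simp_all
  · obtain rfl | rfl : i = 0 ∨ i = 1 := by omega
    · exact ⟨.inl x, rfl, fun j hj => ⟨.inr y, hxy, show 1 = j by omega⟩⟩
    · exact ⟨.inr y, rfl, fun j hj => ⟨.inl x, hxy.symm, show 0 = j by omega⟩⟩

end Bipartite

theorem Bgraph_adj_inl_inr {t : ℕ} (i j : Fin t) :
    (Bgraph t).Adj (.inl i) (.inr j) ↔ i ≠ j ∨ i = j ∧ (i : ℕ) = t - 1 := by
  simp [Bgraph]

theorem Bgraph_le_completeBipartiteGraph (t : ℕ) :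
    Bgraph t ≤ completeBipartiteGraph (Fin t) (Fin t) := by
  rintro (i | i) (j | j) h <;> simp_all [Bgraph]

theorem Bgraph_adj_last_inr {t : ℕ} (ht : 0 < t) (j : Fin t) :
    (Bgraph t).Adj (.inl ⟨t - 1, by omega⟩) (.inr j) := by
  rw [Bgraph_adj_inl_inr]
  rcases eq_or_ne ⟨t - 1, by omega⟩ j with rfl | h
  · exact .inr ⟨rfl, rfl⟩
  · exact .inl h

theorem Bgraph_adj_inl_last {t : ℕ} (ht : 0 < t) (i : Fin t) :
    (Bgraph t).Adj (.inl i) (.inr ⟨t - 1, by omega⟩) := by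
  rw [Bgraph_adj_inl_inr]
  rcases eq_or_ne i ⟨t - 1, by omega⟩ with rfl | h
  · exact .inr ⟨rfl, rfl⟩
  · exact .inl h

/-- For every `t ≥ 2`, `b(B_t) = 2`. -/
theorem stmt5 (t : ℕ) (ht : 2 ≤ t) : bChrom (Bgraph t) = 2 :=
  bChrom_eq ⟨_, isBColoring_sumElim (Bgraph_le_completeBipartiteGraph t)
      (Bgraph_adj_last_inr (by omega) ⟨t - 1, by omega⟩)⟩
    fun _ _ hC => hC.le_two_of_forall_adj (Bgraph_le_completeBipartiteGraph t)
      (Bgraph_adj_last_inr (by omega)) (Bgraph_adj_inl_last (by omega))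
end

section
/- Fix an integer t ≥ 2. For every integer p there exists an integer N = N(t,p) such that every b-monotone finite simple graph G that contains no induced subgraph isomorphic to the complete bipartite graph K_{t,t} and satisfies b(G) ≤ p also satisfies Γ(G) ≤ N. Equivalently, for each fixed t the family of K_{t,t}-free b-monotone graphs is (Γ,b)-bounded. -/
/-!
If `G` contains `K_m` (`m = p + 1`), the clique is itself an induced subgraph with a b-colouring
by `m` colours. Otherwise a Grundy colouring with very many colours yields, by Ramsey, a large
independent set `I` of vertices of high colour. Say that `c` absorbs the low colour `g` from `w`
when every `g`-coloured neighbour of `w` is adjacent to `c`. If some `w ∈ I` had many `c ∈ I`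
each absorbing many colours from it, double counting and pigeonhole would give `t - 1` of them
absorbing a common large set of colours; the neighbours of `w` in these colours contain, by
Ramsey again, an independent `t`-set, which together with `w` and the `t - 1` vertices induces
`K_{t,t}`. Hence the digraph "absorbs many colours" on `I` has bounded out-degree, and `I`
contains vertices `w_1, …, w_m` no two of which absorb many colours from each other. Choose
colours `g_1, …, g_m` absorbed by no pair; then `w_i` has a `g_c`-coloured neighbour that is not
adjacent to `w_c`, so the classes `{w_c} ∪ {g_c-coloured non-neighbours of w_c}` b-colour the
subgraph they induce with `m` colours, and b-monotonicity forces `b(G) ≥ m`.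
-/

open SimpleGraph

open Finset

namespace Finset

variable {ι α : Type*}

theorem sum_card_le_card_mul_card_filter_add [DecidableEq α] (J : Finset ι) (U : Finset α)
    (B : ι → Finset α) (hB : ∀ c ∈ J, B c ⊆ U) (s : ℕ) :
    ∑ c ∈ J, #(B c) ≤ #J * #{g ∈ U | s < #{c ∈ J | g ∈ B c}} + s * #U := by
  calc ∑ c ∈ J, #(B c) = ∑ g ∈ U, #{c ∈ J | g ∈ B c} := by
        have hswap := sum_card_bipartiteAbove_eq_sum_card_bipartiteBelow (s := J) (t := U)
          (r := fun c g => g ∈ B c)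
        simp only [bipartiteAbove, bipartiteBelow] at hswap
        rw [← hswap]
        refine sum_congr rfl fun c hc => ?_
        rw [filter_mem_eq_inter, inter_eq_right.mpr (hB c hc)]
    _ ≤ ∑ g ∈ U, if s < #{c ∈ J | g ∈ B c} then #J else s := by
        gcongr with g
        split_ifs with h
        · exact card_filter_le _ _
        · exact not_lt.mp h
    _ ≤ #J * #{g ∈ U | s < #{c ∈ J | g ∈ B c}} + s * #U := by
        rw [sum_ite, sum_const, sum_const, smul_eq_mul, smul_eq_mul, mul_comm, mul_comm _ s]
        gcongr
        exact filter_subset _ _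

theorem exists_subset_lt_card_filter_subset [DecidableEq ι] {J : Finset ι} {H : Finset α}
    {F : α → Finset ι} {k n : ℕ} (hF : ∀ g ∈ H, F g ⊆ J ∧ k ≤ #(F g))
    (h : (#J).choose k * n < #H) :
    ∃ T ⊆ J, #T = k ∧ n < #{g ∈ H | T ⊆ F g} := by
  choose! T hTF hTcard using fun g hg => exists_subset_card_eq (hF g hg).2
  have hmaps : ∀ g ∈ H, T g ∈ J.powersetCard k := fun g hg =>
    mem_powersetCard.mpr ⟨(hTF g hg).trans (hF g hg).1, hTcard g hg⟩
  obtain ⟨T₀, hT₀, hlt⟩ := exists_lt_card_fiber_of_mul_lt_card_of_maps_to hmaps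
    (by rwa [card_powersetCard])
  refine ⟨T₀, (mem_powersetCard.mp hT₀).1, (mem_powersetCard.mp hT₀).2, hlt.trans_le ?_⟩
  refine card_le_card fun g hg => ?_
  rw [mem_filter] at hg ⊢
  exact ⟨hg.1, hg.2 ▸ hTF g hg.1⟩

variable [DecidableEq α] (r : α → α → Prop) [DecidableRel r]

theorem exists_card_filter_ne_and_or_le {I : Finset α} (hI : I.Nonempty) {d : ℕ}
    (hout : ∀ w ∈ I, #{c ∈ I | c ≠ w ∧ r w c} ≤ d) :
    ∃ w ∈ I, #{c ∈ I | c ≠ w ∧ (r w c ∨ r c w)} ≤ 2 * d := by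
  refine exists_le_of_sum_le hI ?_
  have hin :
      ∑ w ∈ I, #{c ∈ I | c ≠ w ∧ r c w} = ∑ w ∈ I, #{c ∈ I | c ≠ w ∧ r w c} := by
    have := sum_card_bipartiteAbove_eq_sum_card_bipartiteBelow (s := I) (t := I)
      (r := fun w c => c ≠ w ∧ r w c)
    simp only [bipartiteAbove, bipartiteBelow] at this
    rw [this]
    exact sum_congr rfl fun w _ => by simp only [ne_comm]
  calc ∑ w ∈ I, #{c ∈ I | c ≠ w ∧ (r w c ∨ r c w)}
      ≤ ∑ w ∈ I, (#{c ∈ I | c ≠ w ∧ r w c} + #{c ∈ I | c ≠ w ∧ r c w}) := by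
        gcongr with w
        simp only [and_or_left, filter_or]
        exact card_union_le _ _
    _ = ∑ w ∈ I, 2 * #{c ∈ I | c ≠ w ∧ r w c} := by
        rw [sum_add_distrib, hin, ← sum_add_distrib]
        simp only [two_mul]
    _ ≤ ∑ w ∈ I, 2 * d := by gcongr with w hw; exact hout w hw

theorem exists_pairwise_not_rel_of_card_filter_le {d : ℕ} :
    ∀ (n : ℕ) (I : Finset α), (∀ w ∈ I, #{c ∈ I | c ≠ w ∧ r w c} ≤ d) →
      n * (2 * d + 1) ≤ #I →
      ∃ W ⊆ I, #W = n ∧ (W : Set α).Pairwise fun x y => ¬ r x y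
  | 0, _, _, _ => ⟨∅, empty_subset _, card_empty, by simp⟩
  | n + 1, I, hout, hI => by
    obtain ⟨w, hw, hwdeg⟩ := exists_card_filter_ne_and_or_le r
      (card_pos.mp (by nlinarith)) hout
    set I' := {c ∈ I | c ≠ w ∧ ¬ (r w c ∨ r c w)}
    have hI'I : I' ⊆ I := filter_subset _ _
    have hcard : n * (2 * d + 1) ≤ #I' := by
      have hsplit := card_filter_add_card_filter_not (s := I.erase w) (fun c => r w c ∨ r c w)
      rw [card_erase_of_mem hw, ← filter_ne', filter_filter, filter_filter] at hsplit
      change _ + #I' = _ at hsplit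
      rw [add_one_mul] at hI
      omega
    obtain ⟨W, hWI', hWcard, hW⟩ := exists_pairwise_not_rel_of_card_filter_le n I'
      (fun c hc => (card_le_card (filter_subset_filter _ hI'I)).trans (hout c (hI'I hc))) hcard
    have hwW : w ∉ W := fun h => (mem_filter.mp (hWI' h)).2.1 rfl
    refine ⟨insert w W, insert_subset hw (hWI'.trans hI'I),
      by rw [card_insert_of_notMem hwW, hWcard], ?_⟩
    rw [coe_insert, Set.pairwise_insert]
    refine ⟨hW, fun c hc _ => ?_⟩
    have := (mem_filter.mp (hWI' hc)).2.2
    tauto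

end Finset

namespace SimpleGraph

variable {V : Type*} {G : SimpleGraph V}

theorem exists_isNClique_or_isNIndepSet_of_choose_le :
    ∀ (a b : ℕ) (A : Finset V), (a + b).choose a ≤ #A →
      (∃ K ⊆ A, G.IsNClique a K) ∨ ∃ I ⊆ A, G.IsNIndepSet b I
  | 0, _, _, _ => Or.inl ⟨∅, empty_subset _, by simp⟩
  | _ + 1, 0, _, _ => Or.inr ⟨∅, empty_subset _, by simp [isNIndepSet_iff]⟩
  | a + 1, b + 1, A, hA => by
    classical
    obtain ⟨x, hx⟩ := card_pos.mp (hA.trans_lt' (Nat.choose_pos (by omega)))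
    set N := {y ∈ A.erase x | G.Adj x y}
    set M := {y ∈ A.erase x | ¬ G.Adj x y}
    have hNA : N ⊆ A := (filter_subset _ _).trans (erase_subset _ _)
    have hMA : M ⊆ A := (filter_subset _ _).trans (erase_subset _ _)
    have hsplit : #N + #M = #A - 1 := by
      rw [card_filter_add_card_filter_not, card_erase_of_mem hx]
    have hpascal : (a + 1 + (b + 1)).choose (a + 1) =
        (a + (b + 1)).choose a + (a + 1 + b).choose (a + 1) := by
      rw [show a + 1 + (b + 1) = a + (b + 1) + 1 by ring, Nat.choose_succ_succ,
        show a + (b + 1) = a + 1 + b by ring]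
    by_cases hN : (a + (b + 1)).choose a ≤ #N
    · rcases exists_isNClique_or_isNIndepSet_of_choose_le a (b + 1) N hN with
        ⟨K, hKN, hK⟩ | ⟨I, hIN, hI⟩
      · exact Or.inl ⟨insert x K, insert_subset hx (hKN.trans hNA),
          hK.insert fun y hy => (mem_filter.mp (hKN hy)).2⟩
      · exact Or.inr ⟨I, hIN.trans hNA, hI⟩
    · rcases exists_isNClique_or_isNIndepSet_of_choose_le (a + 1) b M (by omega) with
        ⟨K, hKM, hK⟩ | ⟨I, hIM, hI⟩
      · exact Or.inl ⟨K, hKM.trans hMA, hK⟩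
      · refine Or.inr ⟨insert x I, insert_subset hx (hIM.trans hMA), ?_⟩
        rw [← isNClique_compl] at hI ⊢
        refine hI.insert fun y hy => ?_
        obtain ⟨hyx, hxy⟩ := mem_filter.mp (hIM hy)
        exact (compl_adj G x y).mpr ⟨(ne_of_mem_erase hyx).symm, hxy⟩

theorem CliqueFree.exists_isNIndepSet_of_choose_le {a b : ℕ} (h : G.CliqueFree a)
    {A : Finset V} (hA : (a + b).choose a ≤ #A) : ∃ I ⊆ A, G.IsNIndepSet b I :=
  (exists_isNClique_or_isNIndepSet_of_choose_le a b A hA).resolve_left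
    fun ⟨K, _, hK⟩ => h K hK

theorem IsIndepSet.not_adj {s : Set V} (hs : G.IsIndepSet s) {x y : V} (hx : x ∈ s)
    (hy : y ∈ s) : ¬ G.Adj x y :=
  fun hxy => hs hx hy hxy.ne hxy

theorem nonempty_completeBipartiteGraph_embedding {t : ℕ} {T B : Finset V}
    (hT : G.IsNIndepSet t T) (hB : G.IsNIndepSet t B) (hTB : ∀ x ∈ T, ∀ y ∈ B, G.Adj x y) :
    Nonempty (completeBipartiteGraph (Fin t) (Fin t) ↪g G) := by
  let a : Fin t → V := fun i => (T.equivFinOfCardEq hT.card_eq).symm i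
  let b : Fin t → V := fun i => (B.equivFinOfCardEq hB.card_eq).symm i
  have haT : ∀ i, a i ∈ T := fun i => coe_mem _
  have hbB : ∀ i, b i ∈ B := fun i => coe_mem _
  have hab : ∀ i j, G.Adj (a i) (b j) := fun i j => hTB _ (haT i) _ (hbB j)
  refine ⟨⟨⟨Sum.elim a b, ?_⟩, ?_⟩⟩
  · exact (Subtype.val_injective.comp (Equiv.injective _)).sumElim
      (Subtype.val_injective.comp (Equiv.injective _)) fun i j h => (hab i j).ne h
  · rintro (i | i) (j | j)
    · simpa using hT.isIndepSet.not_adj (haT i) (haT j)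
    · simpa using hab i j
    · simpa using (hab j i).symm
    · simpa using hB.isIndepSet.not_adj (hbB i) (hbB j)

theorem IsBColoring.le_bChrom [Finite V] {k : ℕ} {C : V → Fin k} (hC : IsBColoring G C) :
    k ≤ bChrom G := by
  refine le_csSup ⟨Nat.card V, ?_⟩ ⟨C, hC⟩
  rintro j ⟨C', hC'⟩
  simpa using Nat.card_le_card_of_surjective C' fun i => (hC'.2 i).imp fun _ h => h.1

theorem le_bChrom_induce_iUnion [Finite V] {m : ℕ} (X : Fin m → Set V)
    (hdisj : Pairwise fun c c' => Disjoint (X c) (X c')) (hind : ∀ c, G.IsIndepSet (X c))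
    (hdom : ∀ c, ∃ v ∈ X c, ∀ c', c' ≠ c → ∃ y ∈ X c', G.Adj v y) :
    m ≤ bChrom (G.induce (⋃ c, X c)) := by
  let col : (⋃ c, X c) → Fin m := fun x => (Set.mem_iUnion.mp x.2).choose
  have hcol : ∀ (x : ⋃ c, X c) c, (x : V) ∈ X c → col x = c := fun x c hx => by
    by_contra hne
    exact Set.disjoint_left.mp (hdisj hne) (Set.mem_iUnion.mp x.2).choose_spec hx
  refine IsBColoring.le_bChrom (C := col) ⟨fun x y hxy hc => ?_, fun c => ?_⟩
  · have hy : (y : V) ∈ X (col x) := hc ▸ (Set.mem_iUnion.mp y.2).choose_spec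
    exact (hind _).not_adj (Set.mem_iUnion.mp x.2).choose_spec hy hxy
  · obtain ⟨v, hv, hvdom⟩ := hdom c
    refine ⟨⟨v, Set.mem_iUnion_of_mem c hv⟩, hcol _ c hv, fun c' hc' => ?_⟩
    obtain ⟨y, hy, hvy⟩ := hvdom c' hc'
    exact ⟨⟨y, Set.mem_iUnion_of_mem c' hy⟩, hvy, hcol _ c' hy⟩

theorem IsNClique.exists_le_bChrom_induce [Finite V] {m : ℕ} {K : Finset V}
    (hK : G.IsNClique m K) : ∃ s : Set V, m ≤ bChrom (G.induce s) := by
  let e : Fin m → V := fun c => (K.equivFinOfCardEq hK.card_eq).symm c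
  have he : Function.Injective e := Subtype.val_injective.comp (Equiv.injective _)
  refine ⟨_, le_bChrom_induce_iUnion (fun c => {e c}) ?_ (fun c => Set.pairwise_singleton _ _)
    fun c => ⟨e c, rfl, fun c' hc' => ⟨e c', rfl, ?_⟩⟩⟩
  · exact fun c c' hcc' => Set.disjoint_singleton.mpr (he.ne hcc')
  · exact hK.isClique (coe_mem _) (coe_mem _) (he.ne hc'.symm)

theorem exists_le_bChrom_induce_of_privateNeighbors [Finite V] {α : Type*} {col : V → α}
    (hcol : ∀ v w, G.Adj v w → col v ≠ col w) {m : ℕ} {w : Fin m → V} {g : Fin m → α}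
    (hg : Function.Injective g) (hwg : ∀ i j, col (w i) ≠ g j)
    (hpriv : ∀ i c, i ≠ c → ∃ y, col y = g c ∧ G.Adj (w i) y ∧ ¬ G.Adj (w c) y) :
    ∃ s : Set V, m ≤ bChrom (G.induce s) := by
  have hwinj : Function.Injective w := fun i c hic => by
    by_contra hne
    obtain ⟨y, -, hiy, hcy⟩ := hpriv i c hne
    exact hcy (hic ▸ hiy)
  let X : Fin m → Set V := fun c => insert (w c) {y | col y = g c ∧ ¬ G.Adj (w c) y}
  refine ⟨_, le_bChrom_induce_iUnion X ?_ (fun c => ?_) fun c => ⟨w c, Set.mem_insert _ _,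
    fun c' hc' => ?_⟩⟩
  · intro c c' hcc'
    refine Set.disjoint_left.mpr fun y hyc hyc' => ?_
    rcases hyc with rfl | ⟨hyc, -⟩ <;> rcases hyc' with hyc' | ⟨hyc', -⟩
    · exact hcc' (hwinj hyc')
    · exact hwg c c' hyc'
    · exact hwg c' c (hyc' ▸ hyc)
    · exact hcc' (hg (hyc.symm.trans hyc'))
  · refine Set.pairwise_insert.mpr ⟨fun y hy z hz _ hyz => hcol y z hyz (hy.1.trans hz.1.symm),
      fun y hy _ => ⟨hy.2, fun hyw => hy.2 hyw.symm⟩⟩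
  · obtain ⟨y, hy, hcy, hc'y⟩ := hpriv c c' hc'.symm
    exact ⟨y, Or.inr ⟨hy, hc'y⟩, hcy⟩

end SimpleGraph

section Absorption

variable {V : Type*} {k : ℕ}

def AbsorbsColor (G : SimpleGraph V) (C : V → Fin k) (w c : V) (g : ℕ) : Prop :=
  ∀ y, (C y : ℕ) = g → G.Adj w y → G.Adj c y

open Classical in
noncomputable def absorbedColors (G : SimpleGraph V) (C : V → Fin k) (P : ℕ) (w c : V) :
    Finset ℕ :=
  {g ∈ range P | AbsorbsColor G C w c g}

theorem mem_absorbedColors {G : SimpleGraph V} {C : V → Fin k} {P g : ℕ} {w c : V} :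
    g ∈ absorbedColors G C P w c ↔ g < P ∧ AbsorbsColor G C w c g := by
  simp [absorbedColors]

end Absorption

namespace IsGrundyColoring

variable {V : Type*} {G : SimpleGraph V} {k : ℕ} {C : V → Fin k}

theorem exists_adj_of_lt (hC : IsGrundyColoring G C) {v : V} {g : ℕ} (hg : g < C v) :
    ∃ y, G.Adj v y ∧ (C y : ℕ) = g := by
  obtain ⟨y, hy, hCy⟩ := hC.2.2 v ⟨g, hg.trans (C v).isLt⟩ hg
  exact ⟨y, hy, congrArg Fin.val hCy⟩

theorem exists_isNIndepSet_le (hC : IsGrundyColoring G C) {m n P : ℕ} (hcf : G.CliqueFree m)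
    (hk : P + (m + n).choose m ≤ k) :
    ∃ I : Finset V, G.IsNIndepSet n I ∧ ∀ x ∈ I, P ≤ C x := by
  let e : Fin ((m + n).choose m) ↪ V := ((Fin.natAddEmb P).trans (Fin.castLEEmb hk)).trans
    ⟨Function.surjInv hC.2.1, Function.injective_surjInv _⟩
  obtain ⟨I, hI, hIn⟩ :=
    hcf.exists_isNIndepSet_of_choose_le (A := univ.map e) (b := n) (by simp)
  refine ⟨I, hIn, fun x hx => ?_⟩
  obtain ⟨j, -, rfl⟩ := mem_map.mp (hI hx)
  simp [e, Function.surjInv_eq]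

theorem nonempty_embedding_of_absorbsColor (hC : IsGrundyColoring G C) {m t : ℕ}
    (hcf : G.CliqueFree m) {T : Finset V} (hT : G.IsNIndepSet t T) {w : V} {X : Finset ℕ}
    (hX : (m + t).choose m ≤ #X) (hXw : ∀ g ∈ X, g < C w)
    (habs : ∀ g ∈ X, ∀ c ∈ T, AbsorbsColor G C w c g) :
    Nonempty (completeBipartiteGraph (Fin t) (Fin t) ↪g G) := by
  classical
  have : Nonempty V := ⟨w⟩
  choose! y hwy hCy using fun g hg => hC.exists_adj_of_lt (hXw g hg)
  have hinj : Set.InjOn y X := fun g hg g' hg' h => (hCy g hg).symm.trans (h ▸ hCy g' hg')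
  obtain ⟨B, hBY, hB⟩ := hcf.exists_isNIndepSet_of_choose_le (A := X.image y)
    (by rwa [card_image_of_injOn hinj])
  refine nonempty_completeBipartiteGraph_embedding hT hB fun c hc b hb => ?_
  obtain ⟨g, hg, rfl⟩ := mem_image.mp (hBY hb)
  exact habs g hg c hc _ (hCy g hg) (hwy g hg)

theorem card_filter_lt_card_absorbedColors_le [DecidableEq V] (hC : IsGrundyColoring G C)
    {m t D S P : ℕ} (hcf : G.CliqueFree m)
    (hK : IsEmpty (completeBipartiteGraph (Fin t) (Fin t) ↪g G)) (ht : 0 < t)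
    (hcount : (D + 1) * ((D + 1).choose (t - 1) * (m + t).choose m) + (t - 2) * P <
      (D + 1) * (S + 1))
    {I : Finset V} (hI : G.IsIndepSet I) {w : V} (hw : w ∈ I) (hwP : P ≤ C w) :
    #{c ∈ I | c ≠ w ∧ S < #(absorbedColors G C P w c)} ≤ D := by
  by_contra! hD
  obtain ⟨J, hJ, hJcard⟩ := exists_subset_card_eq (show D + 1 ≤ _ from hD)
  set B := absorbedColors G C P w
  have hJB : ∀ c ∈ J, c ∈ I ∧ c ≠ w ∧ S < #(B c) := fun c hc => mem_filter.mp (hJ hc)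
  let F : ℕ → Finset V := fun g => {c ∈ J | g ∈ B c}
  let H := {g ∈ range P | t - 2 < #(F g)}
  have hlower : (D + 1) * (S + 1) ≤ ∑ c ∈ J, #(B c) := by
    rw [← hJcard, ← smul_eq_mul, ← sum_const]
    exact sum_le_sum fun c hc => (hJB c hc).2.2
  have hupper := sum_card_le_card_mul_card_filter_add J (range P) B
    (fun c _ g hg => mem_range.mpr (mem_absorbedColors.mp hg).1) (t - 2)
  rw [hJcard, card_range] at hupper
  change _ ≤ _ * #H + _ at hupper
  have hH : (D + 1).choose (t - 1) * (m + t).choose m < #H :=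
    Nat.lt_of_mul_lt_mul_left (a := D + 1) (by omega)
  obtain ⟨T, hTJ, hTcard, hTH⟩ := exists_subset_lt_card_filter_subset (J := J) (H := H) (F := F)
    (k := t - 1) (fun g hg => ⟨filter_subset _ _, by have := (mem_filter.mp hg).2; omega⟩)
    (by rwa [hJcard])
  have hwT : w ∉ T := fun h => (hJB w (hTJ h)).2.1 rfl
  have hT : G.IsNIndepSet t (insert w T) := by
    refine ⟨hI.mono ?_, ?_⟩
    · rw [coe_insert]
      exact Set.insert_subset hw fun c hc => (hJB c (hTJ hc)).1
    · rw [card_insert_of_notMem hwT, hTcard]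
      omega
  have hXw : ∀ g ∈ {g ∈ H | T ⊆ F g}, g < C w := fun g hg =>
    (mem_range.mp (mem_filter.mp (mem_filter.mp hg).1).1).trans_le hwP
  have habs : ∀ g ∈ {g ∈ H | T ⊆ F g}, ∀ c ∈ insert w T, AbsorbsColor G C w c g := by
    intro g hg c hc
    rcases mem_insert.mp hc with rfl | hc
    · exact fun y _ hy => hy
    · exact (mem_absorbedColors.mp (mem_filter.mp ((mem_filter.mp hg).2 hc)).2).2
  exact hK.false (hC.nonempty_embedding_of_absorbsColor hcf hT hTH.le hXw habs).some

theorem exists_le_bChrom_induce_of_card_absorbedColors_le [Finite V]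
    (hC : IsGrundyColoring G C) {m S P : ℕ} {W : Finset V} (hW : #W = m)
    (hWP : ∀ w ∈ W, P ≤ C w)
    (habs : ∀ v ∈ W, ∀ w ∈ W, v ≠ w → #(absorbedColors G C P v w) ≤ S)
    (hP : m * m * S + m ≤ P) :
    ∃ s : Set V, m ≤ bChrom (G.induce s) := by
  classical
  let U := W.offDiag.biUnion fun q => absorbedColors G C P q.1 q.2
  have hU : #U ≤ m * m * S := calc
    #U ≤ ∑ q ∈ W.offDiag, #(absorbedColors G C P q.1 q.2) := card_biUnion_le
    _ ≤ ∑ q ∈ W.offDiag, S := sum_le_sum fun q hq =>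
        let ⟨hq₁, hq₂, hq⟩ := mem_offDiag.mp hq
        habs _ hq₁ _ hq₂ hq
    _ ≤ m * m * S := by
        rw [sum_const, smul_eq_mul, offDiag_card, hW]
        gcongr
        exact Nat.sub_le _ _
  have hgood : m ≤ #(range P \ U) := by
    have := le_card_sdiff U (range P)
    rw [card_range] at this
    omega
  let w : Fin m → V := fun i => (W.equivFinOfCardEq hW).symm i
  have hw : Function.Injective w := Subtype.val_injective.comp (Equiv.injective _)
  let g : Fin m → ℕ := fun c => (range P \ U).equivFin.symm (Fin.castLE hgood c)
  have hgmem : ∀ c, g c ∈ range P \ U := fun c => coe_mem _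
  refine exists_le_bChrom_induce_of_privateNeighbors (col := fun v => (C v : ℕ))
    (fun v v' hvv' h => hC.1 v v' hvv' (Fin.ext h)) (w := w) (g := g)
    (Subtype.val_injective.comp ((Equiv.injective _).comp (Fin.castLE_injective hgood)))
    (fun i j => ?_) fun i c hic => ?_
  · obtain ⟨hgP, -⟩ := mem_sdiff.mp (hgmem j)
    exact ((mem_range.mp hgP).trans_le (hWP _ (coe_mem _))).ne'
  · obtain ⟨hgP, hgU⟩ := mem_sdiff.mp (hgmem c)
    have hnabs : g c ∉ absorbedColors G C P (w i) (w c) := fun h => hgU <|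
      mem_biUnion.mpr ⟨(w i, w c), mem_offDiag.mpr ⟨coe_mem _, coe_mem _, hw.ne hic⟩, h⟩
    rw [mem_absorbedColors, AbsorbsColor] at hnabs
    push Not at hnabs
    exact (hnabs (mem_range.mp hgP)).imp fun y h => ⟨h.1, h.2⟩

theorem exists_le_bChrom_induce [Finite V] (hC : IsGrundyColoring G C) {m t D S P : ℕ}
    (hK : IsEmpty (completeBipartiteGraph (Fin t) (Fin t) ↪g G)) (ht : 0 < t)
    (hcount : (D + 1) * ((D + 1).choose (t - 1) * (m + t).choose m) + (t - 2) * P <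
      (D + 1) * (S + 1))
    (hP : m * m * S + m ≤ P) (hk : P + (m + m * (2 * D + 1)).choose m ≤ k) :
    ∃ s : Set V, m ≤ bChrom (G.induce s) := by
  classical
  by_cases hcf : G.CliqueFree m
  · obtain ⟨I, hI, hIP⟩ := hC.exists_isNIndepSet_le hcf hk
    obtain ⟨W, hWI, hW, hWabs⟩ := exists_pairwise_not_rel_of_card_filter_le
      (fun v w => S < #(absorbedColors G C P v w)) m I
      (fun w hw => hC.card_filter_lt_card_absorbedColors_le hcf hK ht hcount hI.isIndepSet hw
        (hIP w hw)) (by rw [hI.card_eq])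
    exact hC.exists_le_bChrom_induce_of_card_absorbedColors_le hW (fun w hw => hIP w (hWI hw))
      (fun v hv w hw hvw => not_lt.mp (hWabs hv hw hvw)) hP
  · obtain ⟨K, hK⟩ := not_forall_not.mp hcf
    exact hK.exists_le_bChrom_induce

end IsGrundyColoring

theorem exists_absorption_parameters (m t : ℕ) : ∃ D S P : ℕ,
    (D + 1) * ((D + 1).choose (t - 1) * (m + t).choose m) + (t - 2) * P < (D + 1) * (S + 1) ∧
      m * m * S + m ≤ P := by
  set D := (t - 2) * (m * m + m)
  set X := (D + 1) * ((D + 1).choose (t - 1) * (m + t).choose m)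
  refine ⟨D, X + 1, m * m * (X + 1) + m, ?_, le_rfl⟩
  change X + _ < (D + 1) * (X + 1 + 1)
  have hP : (t - 2) * (m * m * (X + 1) + m) ≤ D * (X + 1) := calc
    _ ≤ (t - 2) * ((m * m + m) * (X + 1)) := by gcongr; nlinarith
    _ = D * (X + 1) := by ring
  nlinarith

/-- Fix `t ≥ 2`. For every `p` there is `N` such that every b-monotone finite simple graph
`G` with no induced subgraph isomorphic to `K_{t,t}` and with `b(G) ≤ p` satisfies
`Γ(G) ≤ N`; i.e. the family of `K_{t,t}`-free b-monotone graphs is `(Γ, b)`-bounded. -/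
theorem stmt14 (t : ℕ) (ht : 2 ≤ t) (p : ℕ) :
    ∃ N : ℕ, ∀ (V : Type) [Fintype V] (G : SimpleGraph V),
      (∀ s : Set V, bChrom (G.induce s) ≤ bChrom G) →
      IsEmpty (completeBipartiteGraph (Fin t) (Fin t) ↪g G) →
      bChrom G ≤ p → grundyNum G ≤ N := by
  obtain ⟨D, S, P, hcount, hP⟩ := exists_absorption_parameters (p + 1) t
  refine ⟨P + (p + 1 + (p + 1) * (2 * D + 1)).choose (p + 1),
    fun V _ G hmono hK hb => csSup_le' ?_⟩
  rintro k ⟨C, hC⟩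
  by_contra! hk
  obtain ⟨s, hs⟩ := hC.exists_le_bChrom_induce hK (by omega) hcount hP hk.le
  have := hmono s
  omega
end

section
/- For every finite simple graph G with at least one vertex, b(G) ≤ m(G). -/
open SimpleGraph

/-!
Choosing one b-vertex in each of the `k` colour classes gives `k` distinct vertices, each of
which sees `k - 1` distinct colours among its neighbours and so has degree at least `k - 1`.
-/

section

variable {V : Type*} {G : SimpleGraph V}

theorem card_le_mParam [Fintype V] (s : Finset V) (hs : ∀ v ∈ s, s.card - 1 ≤ vdeg G v) :
    s.card ≤ mParam G :=
  le_csSup ⟨Fintype.card V, by rintro _ ⟨t, rfl, -⟩; exact t.card_le_univ⟩ ⟨s, rfl, hs⟩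

theorem sub_one_le_vdeg_of_forall_ne_exists_adj [Finite V] {k : ℕ} (C : V → Fin k) {v : V}
    (hv : ∀ j ≠ C v, ∃ w, G.Adj v w ∧ C w = j) : k - 1 ≤ vdeg G v := by
  choose g hadj hcol using hv
  have hinj : Function.Injective
      fun j : {j // j ≠ C v} => (⟨g j j.2, hadj j j.2⟩ : {w // G.Adj v w}) := by
    rintro ⟨a, ha⟩ ⟨b, hb⟩ hab
    simp only [Subtype.mk.injEq] at hab ⊢
    rw [← hcol a ha, ← hcol b hb, hab]
  calc k - 1 = Nat.card {j // j ≠ C v} := by simp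
    _ ≤ vdeg G v := Nat.card_le_card_of_injective _ hinj

theorem IsBColoring.le_mParam [Fintype V] {k : ℕ} {C : V → Fin k} (hC : IsBColoring G C) :
    k ≤ mParam G := by
  choose f hf hsees using hC.2
  have hf_inj : f.Injective := fun i j hij => by rw [← hf i, ← hf j, hij]
  have hcard : (Finset.univ.map ⟨f, hf_inj⟩).card = k := by simp
  refine hcard ▸ card_le_mParam _ ?_
  simp only [hcard, Finset.mem_map, Finset.mem_univ, true_and, Function.Embedding.coeFn_mk,
    forall_exists_index, forall_apply_eq_imp_iff]
  exact fun i => sub_one_le_vdeg_of_forall_ne_exists_adj C (by rw [hf i]; exact hsees i)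

end

theorem stmt15_general {V : Type*} [Fintype V] (G : SimpleGraph V) :
    bChrom G ≤ mParam G :=
  csSup_le' fun _ ⟨_, hC⟩ => hC.le_mParam

/-- Every finite simple graph `G` with at least one vertex satisfies `b(G) ≤ m(G)`. -/
theorem stmt15 {V : Type*} [Fintype V] [Nonempty V] (G : SimpleGraph V) :
    bChrom G ≤ mParam G :=
  stmt15_general G
end
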